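/- arXiv:2107.13102 — 3 statements merged into one kernel-verified Lean document; each statement's English description precedes it below -/
import Mathlib

section
/- Let $A$ be a finite-dimensional Frobenius algebra over a field $k$. Then an $A$-module $M$ (not necessarily finite-dimensional) is projective if and only if it is injective. -/
/-!
The Frobenius isomorphism `e : A ≃ A*` turns `k`-linear maps into `A`-linear ones: a `k`-linear
map `g : N → k^(ι)` lifts to the `A`-linear map `N → A^(ι)` whose `i`-th coordinate at `n` is
`e⁻¹ (x ↦ g (x • n) i)`, with finite support because `A` is finite-dimensional.
Lifting the coordinates of a `k`-basis of `M` embeds `M` into a free module; if `M` is injective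
the embedding splits, so `M` is projective. Conversely, extending a map from an ideal `I ≤ A`
`k`-linearly to `A` and lifting it verifies Baer's criterion for free modules, so free modules
and their direct summands, the projective modules, are injective.
-/

theorem Finsupp.finite_setOf_exists_apply_ne_zero {R V W ι : Type*} [Semiring R]
    [AddCommMonoid V] [Module R V] [Module.Finite R V] [AddCommMonoid W] [Module R W]
    (q : V →ₗ[R] ι →₀ W) : {i | ∃ x, q x i ≠ 0}.Finite := by
  classical
  obtain ⟨s, hs⟩ := Module.Finite.fg_top (R := R) (M := V)
  set S : Finset ι := s.biUnion fun v => (q v).support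
  have hspan : Submodule.span R (s : Set V) ≤ (Finsupp.supported W R (S : Set ι)).comap q :=
    Submodule.span_le.mpr fun v hv => (Finsupp.mem_supported R _).mpr fun i hi =>
      Finset.mem_biUnion.mpr ⟨v, hv, hi⟩
  refine S.finite_toSet.subset ?_
  rintro i ⟨x, hx⟩
  exact (Finsupp.mem_supported R _).mp (hspan (hs ▸ Submodule.mem_top))
    (Finsupp.mem_support_iff.mpr hx)

theorem Module.Baer.of_retract {R M N : Type*} [Ring R] [AddCommGroup M] [Module R M]
    [AddCommGroup N] [Module R N] (s : M →ₗ[R] N) (p : N →ₗ[R] M) (hps : p ∘ₗ s = .id)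
    (hN : Module.Baer R N) : Module.Baer R M := fun I g => by
  obtain ⟨g', hg'⟩ := hN I (s ∘ₗ g)
  refine ⟨p ∘ₗ g', fun x hx => ?_⟩
  rw [LinearMap.comp_apply, hg', LinearMap.comp_apply, ← LinearMap.comp_apply p, hps,
    LinearMap.id_apply]

section Frobenius

variable {k A : Type*} [CommRing k] [Ring A] [Algebra k A] [Module.Finite k A]
  (e : A ≃ₗ[k] Module.Dual k A) (he : ∀ a x y : A, e (a * x) y = e x (y * a))
  {N : Type*} [AddCommGroup N] [Module A N] [Module k N] [IsScalarTower k A N] {ι : Type*}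

noncomputable def frobeniusCoord (g : N →ₗ[k] ι →₀ k) (n : N) (i : ι) : Module.Dual k A :=
  Finsupp.lapply i ∘ₗ g ∘ₗ (LinearMap.toSpanSingleton A N n).restrictScalars k

omit [Module.Finite k A] in
@[simp]
theorem frobeniusCoord_apply (g : N →ₗ[k] ι →₀ k) (n : N) (i : ι) (x : A) :
    frobeniusCoord g n i x = g (x • n) i := rfl

theorem finite_support_frobeniusCoord (g : N →ₗ[k] ι →₀ k) (n : N) :
    (Function.support fun i => e.symm (frobeniusCoord g n i)).Finite := by
  refine (Finsupp.finite_setOf_exists_apply_ne_zero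
    (g ∘ₗ (LinearMap.toSpanSingleton A N n).restrictScalars k)).subset fun i hi => ?_
  exact DFunLike.ne_iff.mp (e.symm.map_ne_zero_iff.mp hi)

noncomputable def frobeniusLift (g : N →ₗ[k] ι →₀ k) : N →ₗ[A] ι →₀ A where
  toFun n := Finsupp.ofSupportFinite _ (finite_support_frobeniusCoord e g n)
  map_add' n n' := Finsupp.ext fun i => by
    simp only [Finsupp.ofSupportFinite_coe, Finsupp.add_apply, ← map_add]
    congr 1
    ext x
    simp [smul_add]
  map_smul' a n := Finsupp.ext fun i => by
    simp only [Finsupp.ofSupportFinite_coe, Finsupp.smul_apply, smul_eq_mul, RingHom.id_apply]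
    apply e.injective
    ext x
    simp [he, mul_smul]

theorem frobeniusLift_apply (g : N →ₗ[k] ι →₀ k) (n : N) (i : ι) (x : A) :
    e (frobeniusLift e he g n i) x = g (x • n) i := by
  simp [frobeniusLift, Finsupp.ofSupportFinite_coe]

theorem frobeniusLift_injective {g : N →ₗ[k] ι →₀ k} (hg : Function.Injective g) :
    Function.Injective (frobeniusLift e he g) := by
  refine (injective_iff_map_eq_zero _).mpr fun n hn => hg ?_
  ext i
  simpa [hn] using (frobeniusLift_apply e he g n i 1).symm

end Frobenius

universe v in
theorem small_of_nontrivial_module (k : Type*) {A : Type*} [Field k] [Ring A] [Algebra k A]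
    [Module.Finite k A] (M : Type v) [AddCommGroup M] [Module A M] [Nontrivial M] :
    Small.{v} A := by
  obtain ⟨m, hm⟩ := exists_ne (0 : M)
  let _ : Module k M := Module.compHom M (algebraMap k A)
  have : Small.{v} k := small_of_injective (smul_left_injective k hm)
  exact Module.Finite.small k A

section FrobeniusField

variable {k A : Type*} [Field k] [Ring A] [Algebra k A] [Module.Finite k A]
  (e : A ≃ₗ[k] Module.Dual k A) (he : ∀ a x y : A, e (a * x) y = e x (y * a))

include he in
theorem Module.Baer.finsupp_of_frobenius (ι : Type*) : Module.Baer A (ι →₀ A) := by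
  intro I φ
  obtain ⟨r, hr⟩ := (I.subtype.restrictScalars k).exists_leftInverse_of_injective (by simp)
  let g : A →ₗ[k] ι →₀ k :=
    Finsupp.mapRange.linearMap (e.toLinearMap.flip 1) ∘ₗ φ.restrictScalars k ∘ₗ r
  refine ⟨frobeniusLift e he g, fun a ha => Finsupp.ext fun i =>
    e.injective (LinearMap.ext fun x => ?_)⟩
  have hr' : r (x * a) = x • ⟨a, ha⟩ := LinearMap.congr_fun hr (x • ⟨a, ha⟩)
  have hφ : φ (x • ⟨a, ha⟩) i = x * φ ⟨a, ha⟩ i := by rw [map_smul]; rfl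
  simp only [frobeniusLift_apply, g, LinearMap.comp_apply, LinearMap.restrictScalars_apply,
    smul_eq_mul, hr', Finsupp.mapRange.linearMap_apply, Finsupp.mapRange_apply, hφ,
    LinearMap.flip_apply, LinearEquiv.coe_coe, he, one_mul]

include he in
theorem Module.Injective.of_projective_of_frobenius (M : Type*) [AddCommGroup M] [Module A M]
    [Module.Projective A M] : Module.Injective A M := by
  obtain ⟨s, hs⟩ := Module.projective_def'.mp ‹Module.Projective A M›
  exact (Module.Baer.of_retract s _ hs (Module.Baer.finsupp_of_frobenius e he M)).injective

include he in
theorem Module.Projective.of_injective_of_frobenius (M : Type*) [AddCommGroup M] [Module A M]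
    [Module.Injective A M] : Module.Projective A M := by
  cases subsingleton_or_nontrivial M
  · infer_instance
  -- `Module.Injective A M` only tests modules in the universe of `M`; `ι →₀ A` may lie higher
  have := small_of_nontrivial_module k (A := A) M
  let _ : Module k M := Module.compHom M (algebraMap k A)
  have : IsScalarTower k A M := ⟨fun c a m => by rw [Algebra.smul_def, mul_smul]; rfl⟩
  let b := Module.Basis.ofVectorSpace k M
  obtain ⟨p, hp⟩ := Module.Injective.extension_property A M M _
    (frobeniusLift e he b.repr.toLinearMap) (frobeniusLift_injective e he b.repr.injective) .id
  exact .of_split _ p hp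

end FrobeniusField

theorem stmt_0 (k A : Type*) [Field k] [Ring A] [Algebra k A]
    [FiniteDimensional k A]
    (hFrobenius : ∃ e : A ≃ₗ[k] Module.Dual k A,
      ∀ a x y : A, e (a * x) y = e x (y * a))
    (M : Type*) [AddCommGroup M] [Module A M] :
    Module.Projective A M ↔ Module.Injective A M := by
  obtain ⟨e, he⟩ := hFrobenius
  exact ⟨fun _ => .of_projective_of_frobenius e he M, fun _ => .of_injective_of_frobenius e he M⟩
end

section
/- Let $A$ be a finite-dimensional Hopf algebra with finite type cohomology. For any closed subset $\Theta$ of $|A| = \mathrm{Proj}\,\mathrm{Ext}^*_A(k,k)$, there exist finitely many homogeneous classes $\zeta_1, \dots, \zeta_m \in \mathrm{Ext}^{ev}_A(k,k)$ such that the tensor product of Carlson modules $L = L_{\zeta_1} \otimes \cdots \otimes L_{\zeta_m}$ has cohomological support $|A|_L = \Theta$. -/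
/-!
STATEMENT 11: Let `A` be a finite-dimensional Hopf algebra with finite type
cohomology.  For any closed subset `Θ` of `|A| = Proj Ext^*_A(k,k)` there are
finitely many homogeneous classes `ζ₁, …, ζ_m ∈ Ext^{ev}_A(k,k)` such that the
tensor product of Carlson modules `L = L_{ζ₁} ⊗ ⋯ ⊗ L_{ζ_m}` has cohomological
support `|A|_L = Θ`.

The setting is modelled by the structure `HopfDerivedSupport` (the bounded
derived category of `A` with its cohomological support in
`Proj Ext^*_A(k,k)`); the grading `𝒜` is the grading of the cohomology ring,
and "even" classes are those of degree `2·n`.  The fact that the support of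
`L_ζ ⊗ V` is `Z(ζ) ∩ |A|_V` (Statement 10) is supplied as the hypothesis
`hcar`.
-/

/-- A model of the bounded derived category of a finite-dimensional Hopf
algebra with finite type cohomology, together with its cohomological support
theory with values in `Proj` of the cohomology ring. -/
structure HopfDerivedSupport (k : Type*) [Field k]
    (R : Type*) [CommRing R] [Algebra k R]
    (𝒜 : ℕ → Submodule k R) [GradedAlgebra 𝒜] (Obj : Type*) where
  zero : Obj
  unit : Obj
  sum : Obj → Obj → Obj
  shift : Obj → Obj
  tri : Obj → Obj → Obj → Prop
  supp : Obj → Set (ProjectiveSpectrum 𝒜)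
  supp_zero : supp zero = ∅
  supp_unit : supp unit = Set.univ
  supp_closed : ∀ V, IsClosed (supp V)
  supp_sum : ∀ V W, supp (sum V W) = supp V ∪ supp W
  supp_shift : ∀ V, supp (shift V) = supp V
  supp_tri : ∀ X Y Z, tri X Y Z →
    supp X ⊆ supp Y ∪ supp Z ∧ supp Y ⊆ supp X ∪ supp Z ∧
      supp Z ⊆ supp X ∪ supp Y
  syzygy : ℕ → Obj
  carlson : ∀ {n : ℕ}, 𝒜 n → Obj
  carlson_tri : ∀ {n : ℕ} (ζ : 𝒜 n), tri (carlson ζ) (syzygy n) unit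

/-!
A Noetherian graded ring has every closed subset of its `Proj` cut out by finitely many
homogeneous elements, and replacing each of them by its square makes all degrees even
without changing the zero loci, since points of `Proj` are prime ideals. Tensoring the
corresponding Carlson modules intersects their supports one hypersurface at a time.
-/

theorem supp_foldr_ofFn {Obj X : Type*} (supp : Obj → Set X) (tensor : Obj → Obj → Obj)
    {m : ℕ} (V : Fin m → Obj) (Z : Fin m → Set X)
    (hV : ∀ i W, supp (tensor (V i) W) = Z i ∩ supp W) (U : Obj) :
    supp ((List.ofFn V).foldr tensor U) = (⋂ i, Z i) ∩ supp U := by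
  suffices ∀ l : List (Fin m),
      supp ((l.map V).foldr tensor U) = (⋂ i ∈ l, Z i) ∩ supp U by
    simpa [List.ofFn_eq_map] using this (List.finRange m)
  intro l
  induction l with
  | nil => simp
  | cons i l ih =>
    simp only [List.map_cons, List.foldr_cons, hV, ih, List.mem_cons, Set.iInter_iInter_eq_or_left,
      Set.inter_assoc]

namespace ProjectiveSpectrum

variable {R A : Type*} [CommRing R] [CommRing A] [Algebra R A]
  (𝒜 : ℕ → Submodule R A) [GradedAlgebra 𝒜]

theorem exists_finset_homogeneous_zeroLocus_eq [IsNoetherianRing A]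
    {Θ : Set (ProjectiveSpectrum 𝒜)} (hΘ : IsClosed Θ) :
    ∃ s : Finset A, (∀ a ∈ s, SetLike.IsHomogeneousElem 𝒜 a) ∧ zeroLocus 𝒜 s = Θ := by
  set I := vanishingIdeal Θ
  -- a homogeneous ideal is spanned by its homogeneous elements, so finitely many of them suffice
  have hI : I.toIdeal.homogeneousCore' 𝒜 = I.toIdeal :=
    I.isHomogeneous.toIdeal_homogeneousCore_eq_self
  obtain ⟨s, hsH, hspan⟩ := (Submodule.fg_span_iff_fg_span_finset_subset _).mp
    (hI ▸ IsNoetherian.noetherian I.toIdeal)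
  refine ⟨s, fun a ha => ?_, ?_⟩
  · obtain ⟨⟨a, hhom⟩, -, rfl⟩ := hsH ha
    exact hhom
  · have hsI : Ideal.span (s : Set A) = I.toIdeal := hspan.symm.trans hI
    rw [← zeroLocus_span, hsI]
    exact (zeroLocus_vanishingIdeal_eq_closure 𝒜 Θ).trans hΘ.closure_eq

theorem exists_even_degree_iInter_zeroLocus_eq (s : Finset A)
    (hs : ∀ a ∈ s, SetLike.IsHomogeneousElem 𝒜 a) :
    ∃ (m : ℕ) (ζ : Fin m → Σ n : ℕ, 𝒜 (2 * n)),
      ⋂ i, zeroLocus 𝒜 {((ζ i).2 : A)} = zeroLocus 𝒜 s := by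
  choose deg hdeg using fun a : s => hs a a.2
  set e := s.equivFin.symm
  refine ⟨s.card, fun i => ⟨deg (e i), ⟨(e i : A) * e i,
    two_mul (deg (e i)) ▸ SetLike.mul_mem_graded (hdeg (e i)) (hdeg (e i))⟩⟩, ?_⟩
  calc ⋂ i, zeroLocus 𝒜 {(e i : A) * e i}
      = ⋂ i, zeroLocus 𝒜 {(e i : A)} := by simp only [zeroLocus_singleton_mul, Set.union_self]
    _ = ⋂ a : s, zeroLocus 𝒜 {(a : A)} := e.surjective.iInter_comp fun a => zeroLocus 𝒜 {(a : A)}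
    _ = zeroLocus 𝒜 s := by
      rw [← zeroLocus_iUnion]
      congr 1
      ext
      simp

end ProjectiveSpectrum

theorem stmt_11 {k R Obj : Type*} [Field k] [CommRing R] [Algebra k R]
    (𝒜 : ℕ → Submodule k R) [GradedAlgebra 𝒜]
    -- finite type cohomology
    (hfg : Algebra.FiniteType k R)
    (D : HopfDerivedSupport k R 𝒜 Obj)
    -- the tensor product of `A`-representations
    (tensor : Obj → Obj → Obj)
    -- `|A|_{L_ζ ⊗ V} = Z(ζ) ∩ |A|_V` (Statement 10)
    (hcar : ∀ {n : ℕ} (ζ : 𝒜 n) (V : Obj),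
      D.supp (tensor (D.carlson ζ) V)
        = ProjectiveSpectrum.zeroLocus 𝒜 {(ζ : R)} ∩ D.supp V)
    (Θ : Set (ProjectiveSpectrum 𝒜)) (hΘ : IsClosed Θ) :
    ∃ (m : ℕ) (ζ : Fin m → Σ n : ℕ, 𝒜 (2 * n)),
      D.supp ((List.ofFn fun i => D.carlson (ζ i).2).foldr tensor D.unit)
        = Θ := by
  have : IsNoetherianRing R := Algebra.FiniteType.isNoetherianRing k R
  obtain ⟨s, hs, rfl⟩ := ProjectiveSpectrum.exists_finset_homogeneous_zeroLocus_eq 𝒜 hΘ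
  obtain ⟨m, ζ, hζ⟩ := ProjectiveSpectrum.exists_even_degree_iInter_zeroLocus_eq 𝒜 s hs
  refine ⟨m, ζ, ?_⟩
  rw [supp_foldr_ofFn D.supp tensor _ _ fun i => hcar (ζ i).2, D.supp_unit, Set.inter_univ, hζ]
end

section
/- Let $G$ be a smooth algebraic group over a field $k$ of characteristic $p > 0$ admitting a quasi-logarithm $l : G \to \mathfrak{g}$. Then for every positive integer $r$, the restriction of $l$ to the $r$-th Frobenius kernel $G_{(r)}$ is a quasi-logarithm for $G_{(r)}$; moreover, since $G_{(r)}$ is infinitesimal, this restricted quasi-logarithm is a closed embedding of schemes $G_{(r)} \to \mathfrak{g}$. -/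
open scoped TensorProduct

/-!
Since `p ^ r ≥ 2`, the ideal `I` of the Frobenius kernel lies in `m²`. Hence `τ`, which kills
`m²`, descends to `m · (H ⧸ I)` and is still a splitting of the cotangent projection there, and
equivariance passes to the quotient by functoriality of `⊗`. In the Noetherian ring `H ⧸ I` the
maximal ideal `M` is generated by nilpotents, so it is nilpotent. Finally, if `A = k + M` with `M`
nilpotent, any subset of `M` that spans `M` modulo `M²` generates `A`: approximating an element
modulo `M ^ n` for increasing `n` terminates once `M ^ n = 0`.
-/

namespace Ideal

variable {k A : Type*} [CommRing k] [CommRing A] [Algebra k A]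

structure IsCotangentSplitting (m : Ideal A) (τ : m →ₗ[k] A) : Prop where
  apply_mem : ∀ a : m, τ a ∈ m
  apply_sub_mem_sq : ∀ a : m, τ a - a ∈ m ^ 2
  apply_eq_zero_of_mem_sq : ∀ a : m, (a : A) ∈ m ^ 2 → τ a = 0

variable (k) in
def mapMkRestrict (m I : Ideal A) : m →ₗ[k] m.map (Quotient.mk I) :=
  LinearMap.codRestrict ((m.map (Quotient.mk I)).restrictScalars k)
    ((Quotient.mkₐ k I).toLinearMap ∘ₗ m.subtype.restrictScalars k)
    fun a => mem_map_of_mem _ a.2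

theorem mapMkRestrict_surjective (m I : Ideal A) :
    Function.Surjective (mapMkRestrict k m I) := by
  rintro ⟨b, hb⟩
  obtain ⟨a, ha, rfl⟩ := (mem_map_iff_of_surjective _ Quotient.mk_surjective).mp hb
  exact ⟨⟨a, ha⟩, rfl⟩

variable {m I : Ideal A}

noncomputable def liftMapMk (τ : m →ₗ[k] A) (hτ : ∀ a : m, (a : A) ∈ I → τ a ∈ I) :
    m.map (Quotient.mk I) →ₗ[k] A ⧸ I :=
  (LinearMap.ker (mapMkRestrict k m I)).liftQ ((Quotient.mkₐ k I).toLinearMap ∘ₗ τ)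
      (fun a ha => Quotient.eq_zero_iff_mem.mpr <|
        hτ a (Quotient.eq_zero_iff_mem.mp (congrArg Subtype.val ha))) ∘ₗ
    ((mapMkRestrict k m I).quotKerEquivOfSurjective (mapMkRestrict_surjective m I)).symm.toLinearMap

theorem liftMapMk_mk (τ : m →ₗ[k] A) (hτ : ∀ a : m, (a : A) ∈ I → τ a ∈ I) (a : m)
    (ha : Quotient.mk I (a : A) ∈ m.map (Quotient.mk I)) :
    liftMapMk τ hτ ⟨Quotient.mk I a, ha⟩ = Quotient.mk I (τ a) := by
  have : (⟨Quotient.mk I a, ha⟩ : m.map (Quotient.mk I)) = mapMkRestrict k m I a := rfl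
  rw [liftMapMk, LinearMap.comp_apply, this, LinearEquiv.coe_toLinearMap,
    LinearMap.quotKerEquivOfSurjective_symm_apply]
  rfl

theorem span_pow_le_pow (m : Ideal A) {n j : ℕ} (h : j ≤ n) :
    span {x | ∃ f ∈ m, x = f ^ n} ≤ m ^ j := by
  rw [span_le]
  rintro _ ⟨f, hf, rfl⟩
  exact pow_le_pow_right h (pow_mem_pow hf n)

theorem map_mk_span_pow_le_nilradical (m : Ideal A) (n : ℕ) :
    m.map (Quotient.mk (span {x | ∃ f ∈ m, x = f ^ n})) ≤ nilradical _ := by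
  rw [map_le_iff_le_comap]
  intro f hf
  rw [mem_comap, mem_nilradical]
  exact ⟨n, by rw [← map_pow, Quotient.eq_zero_iff_mem]; exact subset_span ⟨f, hf, rfl⟩⟩

theorem exists_sub_algebraMap_mem_map_ker (ε : A →ₐ[k] k) (I : Ideal A) (x : A ⧸ I) :
    ∃ c : k, x - algebraMap k (A ⧸ I) c ∈ (RingHom.ker (ε : A →+* k)).map (Quotient.mk I) := by
  obtain ⟨x, rfl⟩ := Quotient.mk_surjective x
  refine ⟨ε x, ?_⟩
  rw [← Quotient.mkₐ_eq_mk k, ← (Quotient.mkₐ k I).commutes (ε x), ← map_sub]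
  exact mem_map_of_mem _ (by simp)

namespace IsCotangentSplitting

variable {τ : m →ₗ[k] A}

theorem apply_mem_of_mem (hτ : IsCotangentSplitting m τ) (hI : I ≤ m ^ 2) (a : m)
    (ha : (a : A) ∈ I) : τ a ∈ I := by
  rw [hτ.apply_eq_zero_of_mem_sq a (hI ha)]
  exact zero_mem I

theorem map (hτ : IsCotangentSplitting m τ) (hI : I ≤ m ^ 2) :
    IsCotangentSplitting (m.map (Quotient.mk I)) (liftMapMk τ (hτ.apply_mem_of_mem hI)) := by
  have lift : ∀ b : m.map (Quotient.mk I), ∃ a : m,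
      b = ⟨Quotient.mk I a, mem_map_of_mem _ a.2⟩ := fun b =>
    (mapMkRestrict_surjective (k := k) m I b).imp fun _ h => h.symm
  constructor
  · intro b
    obtain ⟨a, rfl⟩ := lift b
    rw [liftMapMk_mk]
    exact mem_map_of_mem _ (hτ.apply_mem a)
  · intro b
    obtain ⟨a, rfl⟩ := lift b
    rw [liftMapMk_mk, ← map_sub, ← Ideal.map_pow]
    exact mem_map_of_mem _ (hτ.apply_sub_mem_sq a)
  · intro b hb
    obtain ⟨a, rfl⟩ := lift b
    rw [← Ideal.map_pow] at hb
    obtain ⟨c, hc, hca⟩ := (mem_map_iff_of_surjective _ Quotient.mk_surjective).mp hb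
    have hac : (a : A) - c ∈ I := Quotient.eq.mp hca.symm
    have ha : (a : A) ∈ m ^ 2 := by
      simpa using add_mem hc (hI hac)
    rw [liftMapMk_mk, hτ.apply_eq_zero_of_mem_sq a ha, map_zero]

end IsCotangentSplitting

end Ideal

namespace Algebra

variable {R A : Type*} [CommSemiring R] [CommRing A] [Algebra R A] {M : Ideal A} {s : Set A}

theorem exists_mem_adjoin_sub_mem_pow_succ (hbase : ∀ x : A, ∃ c : R, x - algebraMap R A c ∈ M)
    (hsM : s ⊆ M) (hs : ∀ x ∈ M, ∃ y ∈ s, x - y ∈ M ^ 2) {n : ℕ} {x : A} (hx : x ∈ M ^ n) :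
    ∃ a ∈ adjoin R s, x - a ∈ M ^ (n + 1) := by
  induction hx using Submodule.pow_induction_on_left' with
  | algebraMap x =>
    obtain ⟨c, hc⟩ := hbase x
    exact ⟨algebraMap R A c, Subalgebra.algebraMap_mem _ c, by simpa using hc⟩
  | add x y i _ _ hx hy =>
    obtain ⟨a, ha, hxa⟩ := hx
    obtain ⟨b, hb, hyb⟩ := hy
    refine ⟨a + b, add_mem ha hb, ?_⟩
    rw [add_sub_add_comm]
    exact add_mem hxa hyb
  | mem_mul z hz i x hx ih =>
    obtain ⟨a, ha, hxa⟩ := ih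
    obtain ⟨y, hys, hzy⟩ := hs z hz
    refine ⟨y * a, mul_mem (subset_adjoin hys) ha, ?_⟩
    have hy : y ∈ M ^ 1 := by simpa using hsM hys
    have h1 := Ideal.mul_mem_mul hy hxa
    have h2 := Ideal.mul_mem_mul hzy hx
    rw [← pow_add] at h1 h2
    rw [show z * x - y * a = y * (x - a) + (z - y) * x by ring]
    exact add_mem (by convert h1 using 2; omega) (by convert h2 using 2; omega)

theorem adjoin_eq_top_of_isNilpotent (hM : IsNilpotent M)
    (hbase : ∀ x : A, ∃ c : R, x - algebraMap R A c ∈ M)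
    (hsM : s ⊆ M) (hs : ∀ x ∈ M, ∃ y ∈ s, x - y ∈ M ^ 2) : adjoin R s = ⊤ := by
  have approx : ∀ (n : ℕ) (x : A), ∃ a ∈ adjoin R s, x - a ∈ M ^ n := by
    intro n x
    induction n with
    | zero => exact ⟨0, zero_mem _, by simp⟩
    | succ n ih =>
      obtain ⟨a, ha, hxa⟩ := ih
      obtain ⟨b, hb, hxab⟩ := exists_mem_adjoin_sub_mem_pow_succ hbase hsM hs hxa
      exact ⟨a + b, add_mem ha hb, by rwa [← sub_sub]⟩
  obtain ⟨N, hN⟩ := hM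
  refine Algebra.eq_top_iff.mpr fun x => ?_
  obtain ⟨a, ha, hxa⟩ := approx N x
  rw [hN, Ideal.zero_eq_bot, Ideal.mem_bot, sub_eq_zero] at hxa
  rwa [hxa]

end Algebra

universe u

theorem stmt_19_general (k H : Type u) [Field k] (p : ℕ) (hp : p.Prime)
    [CommRing H] [HopfAlgebra k H]
    -- `G` smooth (and of finite type) over `k`
    (hft : Algebra.FiniteType k H)
    -- the maximal ideal at the identity of `G`
    (m : Ideal H) (hm : m = RingHom.ker (Bialgebra.counitAlgHom k H : H →+* k))
    -- the adjoint coaction of `𝒪(G)` on itself, and its restriction to `m`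
    (ρ : H →ₗ[k] H ⊗[k] H) (ρm : m →ₗ[k] (↥m ⊗[k] H))
    -- the quasi-logarithm for `G`: an ad-equivariant splitting `𝔤* → m`
    -- of `m → m/m² = 𝔤*`, encoded by `τ : m → H`
    (τ : m →ₗ[k] H)
    (hτm : ∀ a : m, τ a ∈ m)
    (hτ1 : ∀ a : m, τ a - (a : H) ∈ m ^ 2)
    (hτ2 : ∀ a : m, (a : H) ∈ m ^ 2 → τ a = 0)
    (heq : ∀ a : m, ρ (τ a) = (TensorProduct.map τ LinearMap.id) (ρm a)) :
    -- for every `r ≥ 1`, with `𝒪(G_(r)) = H/I`, `I = (f^{p^r} : f ∈ m)`, and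
    -- maximal ideal `mr`:
    ∀ r : ℕ, 1 ≤ r →
    ∀ I : Ideal H, I = Ideal.span {x : H | ∃ f ∈ m, x = f ^ p ^ r} →
    ∀ mr : Ideal (H ⧸ I), mr = m.map (Ideal.Quotient.mk I) →
    -- there is a splitting `τr` for `G_(r)` …
    ∃ τr : mr →ₗ[k] H ⧸ I,
      -- … which is the restriction of `τ` (compatibility with the quotient map)
      (∀ (a : m) (hb : Ideal.Quotient.mk I (a : H) ∈ mr),
        τr ⟨Ideal.Quotient.mk I (a : H), hb⟩ = Ideal.Quotient.mk I (τ a)) ∧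
      -- … is a splitting of `mr → mr/mr²` (a quasi-logarithm for `G_(r)`)
      (∀ b : mr, τr b ∈ mr) ∧
      (∀ b : mr, τr b - (b : H ⧸ I) ∈ mr ^ 2) ∧
      (∀ b : mr, (b : H ⧸ I) ∈ mr ^ 2 → τr b = 0) ∧
      -- … remains adjoint-equivariant after passing to the quotient
      (∀ a : m,
        (TensorProduct.map (Ideal.Quotient.mkₐ k I).toLinearMap
            (Ideal.Quotient.mkₐ k I).toLinearMap) (ρ (τ a))
          = (TensorProduct.map
              ((Ideal.Quotient.mkₐ k I).toLinearMap ∘ₗ τ)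
              (Ideal.Quotient.mkₐ k I).toLinearMap) (ρm a)) ∧
      -- … and is a closed embedding `G_(r) → 𝔤`: the image of `τr`
      -- generates `𝒪(G_(r))` as a `k`-algebra
      Algebra.adjoin k (Set.range fun b : mr => τr b) = ⊤ := by
  intro r hr I hI mr hmr
  subst hI hmr
  have hτ : Ideal.IsCotangentSplitting m τ := ⟨hτm, hτ1, hτ2⟩
  have hIm : Ideal.span {x | ∃ f ∈ m, x = f ^ p ^ r} ≤ m ^ 2 :=
    Ideal.span_pow_le_pow m (hp.two_le.trans (Nat.le_self_pow (by omega) p))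
  have hτr := hτ.map hIm
  have := hft.isNoetherianRing
  have hnil := (Ideal.FG.isNilpotent_iff_le_nilradical (IsNoetherian.noetherian _)).mpr
    (Ideal.map_mk_span_pow_le_nilradical m (p ^ r))
  refine ⟨_, Ideal.liftMapMk_mk τ _, hτr.apply_mem, hτr.apply_sub_mem_sq,
    hτr.apply_eq_zero_of_mem_sq, fun a => ?_, ?_⟩
  · rw [heq, ← LinearMap.comp_apply, ← TensorProduct.map_comp, LinearMap.comp_id]
  · refine Algebra.adjoin_eq_top_of_isNilpotent hnil ?_ ?_ ?_
    · simpa only [hm] using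
        Ideal.exists_sub_algebraMap_mem_map_ker (Bialgebra.counitAlgHom k H) _
    · rintro _ ⟨b, rfl⟩
      exact hτr.apply_mem b
    · intro x hx
      refine ⟨_, ⟨⟨x, hx⟩, rfl⟩, ?_⟩
      simpa using neg_mem (hτr.apply_sub_mem_sq ⟨x, hx⟩)

theorem stmt_19 (k H : Type u) [Field k] (p : ℕ) (hp : p.Prime) [CharP k p]
    [CommRing H] [HopfAlgebra k H]
    -- `G` smooth (and of finite type) over `k`
    (hsmooth : Algebra.FormallySmooth k H) (hft : Algebra.FiniteType k H)
    -- the maximal ideal at the identity of `G`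
    (m : Ideal H) (hm : m = RingHom.ker (Bialgebra.counitAlgHom k H : H →+* k))
    -- the adjoint coaction of `𝒪(G)` on itself, and its restriction to `m`
    (ρ : H →ₗ[k] H ⊗[k] H) (ρm : m →ₗ[k] (↥m ⊗[k] H))
    (hρm : ∀ a : m,
      (TensorProduct.map (m.subtype.restrictScalars k) LinearMap.id) (ρm a)
        = ρ (a : H))
    -- the quasi-logarithm for `G`: an ad-equivariant splitting `𝔤* → m`
    -- of `m → m/m² = 𝔤*`, encoded by `τ : m → H`
    (τ : m →ₗ[k] H)
    (hτm : ∀ a : m, τ a ∈ m)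
    (hτ1 : ∀ a : m, τ a - (a : H) ∈ m ^ 2)
    (hτ2 : ∀ a : m, (a : H) ∈ m ^ 2 → τ a = 0)
    (heq : ∀ a : m, ρ (τ a) = (TensorProduct.map τ LinearMap.id) (ρm a)) :
    -- for every `r ≥ 1`, with `𝒪(G_(r)) = H/I`, `I = (f^{p^r} : f ∈ m)`, and
    -- maximal ideal `mr`:
    ∀ r : ℕ, 1 ≤ r →
    ∀ I : Ideal H, I = Ideal.span {x : H | ∃ f ∈ m, x = f ^ p ^ r} →
    ∀ mr : Ideal (H ⧸ I), mr = m.map (Ideal.Quotient.mk I) →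
    -- there is a splitting `τr` for `G_(r)` …
    ∃ τr : mr →ₗ[k] H ⧸ I,
      -- … which is the restriction of `τ` (compatibility with the quotient map)
      (∀ (a : m) (hb : Ideal.Quotient.mk I (a : H) ∈ mr),
        τr ⟨Ideal.Quotient.mk I (a : H), hb⟩ = Ideal.Quotient.mk I (τ a)) ∧
      -- … is a splitting of `mr → mr/mr²` (a quasi-logarithm for `G_(r)`)
      (∀ b : mr, τr b ∈ mr) ∧
      (∀ b : mr, τr b - (b : H ⧸ I) ∈ mr ^ 2) ∧
      (∀ b : mr, (b : H ⧸ I) ∈ mr ^ 2 → τr b = 0) ∧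
      -- … remains adjoint-equivariant after passing to the quotient
      (∀ a : m,
        (TensorProduct.map (Ideal.Quotient.mkₐ k I).toLinearMap
            (Ideal.Quotient.mkₐ k I).toLinearMap) (ρ (τ a))
          = (TensorProduct.map
              ((Ideal.Quotient.mkₐ k I).toLinearMap ∘ₗ τ)
              (Ideal.Quotient.mkₐ k I).toLinearMap) (ρm a)) ∧
      -- … and is a closed embedding `G_(r) → 𝔤`: the image of `τr`
      -- generates `𝒪(G_(r))` as a `k`-algebra
      Algebra.adjoin k (Set.range fun b : mr => τr b) = ⊤ :=
  stmt_19_general k H p hp hft m hm ρ ρm τ hτm hτ1 hτ2 heq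
end
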